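/- arXiv:1810.03306 — 2 statements merged into one kernel-verified Lean document; each statement's English description precedes it below -/
import Mathlib

section
/- Let G be a finite simple connected graph that contains an induced subgraph isomorphic to the claw K_{1,3}. Then G has a connected dominating set D with |D| = 2k + 4 for some nonnegative integer k such that the stability number of the induced subgraph G[D] is at least k + 3; in particular |D| ≤ 2α(G[D]) − 2 ≤ 2α(G) − 2. -/
/-- A set of vertices is a stable (independent) set if its vertices are pairwise nonadjacent. -/
def SimpleGraph.IsStableSet {V : Type*} (G : SimpleGraph V) (s : Finset V) : Prop :=
  ∀ u ∈ s, ∀ v ∈ s, ¬ G.Adj u v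

/-- The stability (independence) number of a graph: the size of a largest stable set. -/
noncomputable def SimpleGraph.stabilityNumber {V : Type*} (G : SimpleGraph V) : ℕ :=
  sSup {n | ∃ s : Finset V, G.IsStableSet s ∧ s.card = n}

/-- A set of vertices is dominating if every vertex is in it or adjacent to one of its
vertices. -/
def SimpleGraph.IsDominatingSet {V : Type*} (G : SimpleGraph V) (D : Finset V) : Prop :=
  ∀ v : V, v ∈ D ∨ ∃ u ∈ D, G.Adj u v

/-!
Start from the claw: its four vertices induce a connected graph in which the three leaves are
stable. While the current set `D` is not dominating, connectivity of `G` gives a vertex `x` at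
distance two from `D`, joined to `D` through some `w`. Adding `x` and `w` keeps `G[D]` connected,
and `x` extends the stable set because it has no neighbour in `D`. Each step adds two vertices to
`D` and one to the stable set, so `|D| = 2k + 4` always comes with a stable subset of size `k + 3`.
-/

namespace SimpleGraph

variable {V W : Type*} {G : SimpleGraph V}

lemma IsStableSet.map {H : SimpleGraph W} {s : Finset W} (hs : H.IsStableSet s) (f : H ↪g G) :
    G.IsStableSet (s.map f.toEmbedding) := by
  simp only [IsStableSet, Finset.mem_map, RelEmbedding.coe_toEmbedding, forall_exists_index,
    and_imp, forall_apply_eq_imp_iff₂, f.map_adj_iff]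
  exact hs

lemma IsStableSet.insert [DecidableEq V] {s : Finset V} {x : V} (hs : G.IsStableSet s)
    (hx : ∀ u ∈ s, ¬ G.Adj u x) : G.IsStableSet (insert x s) := by
  simp only [IsStableSet, Finset.mem_insert, forall_eq_or_imp, G.loopless.irrefl,
    not_false_eq_true, true_and]
  exact ⟨fun u hu h => hx u hu h.symm, fun u hu => ⟨hx u hu, hs u hu⟩⟩

lemma IsStableSet.card_le_stabilityNumber [Finite V] {s : Finset V} (hs : G.IsStableSet s) :
    s.card ≤ G.stabilityNumber := by
  have := Fintype.ofFinite V
  exact le_csSup ⟨Fintype.card V, fun n ⟨t, _, ht⟩ => ht ▸ t.card_le_univ⟩ ⟨s, hs, rfl⟩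

lemma IsStableSet.card_le_stabilityNumber_induce {S D : Finset V} (hS : G.IsStableSet S)
    (hSD : S ⊆ D) : S.card ≤ (G.induce (D : Set V)).stabilityNumber := by
  classical
  have hstable : (G.induce (D : Set V)).IsStableSet (S.subtype (· ∈ (D : Set V))) := by
    intro u hu v hv
    exact hS u (Finset.mem_subtype.mp hu) v (Finset.mem_subtype.mp hv)
  calc S.card = (S.subtype (· ∈ (D : Set V))).card := by
        rw [Finset.card_subtype, Finset.filter_true_of_mem fun _ hx => Finset.mem_coe.mpr (hSD hx)]
    _ ≤ _ := hstable.card_le_stabilityNumber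

lemma Embedding.stabilityNumber_le [Finite V] {H : SimpleGraph W} (f : H ↪g G) :
    H.stabilityNumber ≤ G.stabilityNumber := by
  refine csSup_le ⟨0, ∅, fun _ h => absurd h (Finset.notMem_empty _), rfl⟩ ?_
  rintro _ ⟨s, hs, rfl⟩
  simpa using (hs.map f).card_le_stabilityNumber

lemma stabilityNumber_induce_le [Finite V] (s : Set V) :
    (G.induce s).stabilityNumber ≤ G.stabilityNumber :=
  (Embedding.induce s).stabilityNumber_le

lemma Connected.induce_insert {s : Set V} {u v : V} (hs : (G.induce s).Connected) (hu : u ∈ s)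
    (huv : G.Adj u v) : (G.induce (insert v s)).Connected := by
  rw [Set.insert_eq, Set.union_comm]
  refine connected_induce_union hs.preconnected ?_ hu rfl huv
  rw [induce_singleton_eq_top]
  exact Preconnected.of_subsingleton

lemma connected_induce_insert_of_forall_adj {s : Set V} {c : V} (hc : ∀ v ∈ s, G.Adj c v) :
    (G.induce (insert c s)).Connected := by
  refine induce_connected_of_patches c (Set.mem_insert c s) fun {v} hv => ?_
  rcases hv with rfl | hv
  · exact ⟨{v}, by simp, rfl, rfl, Reachable.refl _⟩
  · exact ⟨{c, v}, Set.insert_subset_insert (Set.singleton_subset_iff.mpr hv), by simp, by simp,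
      (induce_pair_connected_of_adj (hc v hv)).preconnected _ _⟩

lemma Connected.exists_adj_of_not_isDominatingSet (hG : G.Connected) {D : Finset V}
    (hD : D.Nonempty) (hdom : ¬ G.IsDominatingSet D) :
    ∃ x w, G.Adj w x ∧ x ∉ D ∧ (∀ u ∈ D, ¬ G.Adj u x) ∧ ∃ u ∈ D, G.Adj u w := by
  let N : Set V := {z | z ∈ D ∨ ∃ u ∈ D, G.Adj u z}
  obtain ⟨v, hv⟩ := not_forall.mp hdom
  obtain ⟨d, hd⟩ := hD
  obtain ⟨p⟩ := hG.preconnected d v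
  obtain ⟨⟨⟨w, x⟩, hwx⟩, -, hwN, hxN⟩ := p.exists_boundary_dart N (Or.inl hd) hv
  simp only [N, Set.mem_ofPred_eq, not_or, not_exists, not_and] at hwN hxN
  exact ⟨x, w, hwx, hxN.1, hxN.2, hwN.resolve_left fun hw => hxN.2 w hw hwx⟩

lemma Connected.exists_extend_of_not_isDominatingSet [DecidableEq V] (hG : G.Connected)
    {D S : Finset V} (hD : (G.induce (D : Set V)).Connected) (hS : G.IsStableSet S) (hSD : S ⊆ D)
    (hdom : ¬ G.IsDominatingSet D) :
    ∃ x w, x ∉ D ∧ w ∉ D ∧ x ≠ w ∧ (G.induce (insert x (insert w D) : Finset V)).Connected ∧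
      G.IsStableSet (insert x S) := by
  have hDne : D.Nonempty := Finset.coe_nonempty.mp (Set.nonempty_coe_sort.mp hD.nonempty)
  obtain ⟨x, w, hwx, hxD, hx, u, hu, huw⟩ := hG.exists_adj_of_not_isDominatingSet hDne hdom
  refine ⟨x, w, hxD, fun hw => hx w hw hwx, hwx.ne', ?_, hS.insert fun v hv => hx v (hSD hv)⟩
  rw [Finset.coe_insert, Finset.coe_insert]
  exact (hD.induce_insert hu huw).induce_insert (Set.mem_insert w _) hwx

lemma Connected.exists_connected_dominating_superset [Fintype V] [DecidableEq V]
    (hG : G.Connected) {D S : Finset V} (hD : (G.induce (D : Set V)).Connected)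
    (hS : G.IsStableSet S) (hSD : S ⊆ D) :
    ∃ D' S' : Finset V, G.IsDominatingSet D' ∧ (G.induce (D' : Set V)).Connected ∧
      G.IsStableSet S' ∧ S' ⊆ D' ∧ S ⊆ S' ∧ D'.card + 2 * S.card = D.card + 2 * S'.card := by
  by_cases hdom : G.IsDominatingSet D
  · exact ⟨D, S, hdom, hD, hS, hSD, subset_rfl, rfl⟩
  obtain ⟨x, w, hxD, hwD, hxw, hD₁, hS₁⟩ := hG.exists_extend_of_not_isDominatingSet hD hS hSD hdom
  have hcard : (insert x (insert w D)).card = D.card + 2 := by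
    rw [Finset.card_insert_of_notMem (by simp [hxw, hxD]), Finset.card_insert_of_notMem hwD]
  have hxS : x ∉ S := fun h => hxD (hSD h)
  obtain ⟨D', S', hdom', hD', hS', hSD', hSS', hcard'⟩ :=
    hG.exists_connected_dominating_superset hD₁ hS₁
      (Finset.insert_subset_insert x (hSD.trans (Finset.subset_insert w D)))
  refine ⟨D', S', hdom', hD', hS', hSD', (Finset.subset_insert x S).trans hSS', ?_⟩
  rw [Finset.card_insert_of_notMem hxS] at hcard'
  omega
termination_by Fintype.card V - D.card
decreasing_by
  have := (insert x (insert w D)).card_le_univ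
  omega

lemma Embedding.exists_connected_induce_of_star {β : Type*} [Fintype β] [DecidableEq V]
    (e : completeBipartiteGraph (Fin 1) β ↪g G) :
    ∃ D S : Finset V, (G.induce (D : Set V)).Connected ∧ G.IsStableSet S ∧ S ⊆ D ∧
      D.card = Fintype.card β + 1 ∧ S.card = Fintype.card β := by
  let S := (Finset.univ.map Function.Embedding.inr).map e.toEmbedding
  have hcS : e (.inl 0) ∉ S := by simp [S, e.injective.eq_iff]
  refine ⟨insert (e (.inl 0)) S, S, ?_, ?_, Finset.subset_insert _ _, ?_, by simp [S]⟩
  · rw [Finset.coe_insert]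
    refine connected_induce_insert_of_forall_adj fun v hv => ?_
    obtain ⟨_, hb, rfl⟩ := Finset.mem_map.mp hv
    obtain ⟨b, -, rfl⟩ := Finset.mem_map.mp hb
    simp [e.map_adj_iff]
  · exact IsStableSet.map (by simp [IsStableSet]) e
  · rw [Finset.card_insert_of_notMem hcS]
    simp [S]

end SimpleGraph

/-- If `G` is a finite simple connected graph containing an induced claw `K_{1,3}`,
then `G` has a connected dominating set `D` with `|D| = 2k + 4` for some `k ≥ 0`, such
that the stability number of `G[D]` is at least `k + 3`; in particular
`|D| ≤ 2 α(G[D]) - 2 ≤ 2 α(G) - 2`. -/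
theorem exists_connected_dominating_set_of_claw {V : Type*} [Fintype V] [DecidableEq V]
    (G : SimpleGraph V) (hconn : G.Connected)
    (hclaw : Nonempty (completeBipartiteGraph (Fin 1) (Fin 3) ↪g G)) :
    ∃ (D : Finset V) (k : ℕ),
      G.IsDominatingSet D ∧ (G.induce (D : Set V)).Connected ∧
      D.card = 2 * k + 4 ∧
      k + 3 ≤ (G.induce (D : Set V)).stabilityNumber ∧
      D.card ≤ 2 * (G.induce (D : Set V)).stabilityNumber - 2 ∧
      2 * (G.induce (D : Set V)).stabilityNumber - 2 ≤ 2 * G.stabilityNumber - 2 := by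
  obtain ⟨e⟩ := hclaw
  obtain ⟨D₀, S₀, hD₀, hS₀, hS₀D₀, hD₀card, hS₀card⟩ := e.exists_connected_induce_of_star
  obtain ⟨D, S, hdom, hD, hS, hSD, hS₀S, hcard⟩ :=
    hconn.exists_connected_dominating_superset hD₀ hS₀ hS₀D₀
  have hSα := hS.card_le_stabilityNumber_induce hSD
  have hαα := G.stabilityNumber_induce_le (D : Set V)
  have hS₀le := Finset.card_le_card hS₀S
  simp only [hD₀card, hS₀card, Fintype.card_fin] at hcard hS₀le
  exact ⟨D, S.card - 3, hdom, hD, by omega, by omega, by omega, by omega⟩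
end

section
/- Let G be a finite simple graph and let D be a nonempty connected dominating set of G. Then the Hadwiger number of G is at least one more than the Hadwiger number of the graph G − D obtained by deleting the vertices of D, i.e., h(G) ≥ h(G − D) + 1. -/
/-- `G` has a complete minor of order `k`: there are `k` pairwise disjoint nonempty
vertex sets (branch sets), each inducing a connected subgraph, with an edge of `G`
between any two of them.  Contracting each branch set yields `K_k`. -/
def SimpleGraph.HasCompleteMinor {V : Type*} (G : SimpleGraph V) (k : ℕ) : Prop :=
  ∃ B : Fin k → Set V,
    (∀ i, (B i).Nonempty) ∧
    (∀ i, (G.induce (B i)).Connected) ∧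
    (Pairwise fun i j => Disjoint (B i) (B j)) ∧
    (∀ i j, i ≠ j → ∃ u ∈ B i, ∃ v ∈ B j, G.Adj u v)

/-- The Hadwiger number of `G`: the largest `k` such that `K_k` is a minor of `G`. -/
noncomputable def SimpleGraph.hadwigerNumber {V : Type*} (G : SimpleGraph V) : ℕ :=
  sSup {k | G.HasCompleteMinor k}

/-!
Take a largest complete minor of `G - D`; its branch sets are branch sets in `G` as well,
and `D` is one more: it is connected, disjoint from them, and adjacent to each of them
because every vertex outside `D` has a neighbour in `D`.
-/

namespace SimpleGraph

variable {V : Type*} {G : SimpleGraph V}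

noncomputable def induceInduceIso (s : Set V) (t : Set s) :
    (G.induce s).induce t ≃g G.induce (Subtype.val '' t) where
  toEquiv := Equiv.Set.image Subtype.val t Subtype.val_injective
  map_rel_iff' := by simp [Equiv.Set.image, Equiv.Set.imageOfInjOn]

lemma hasCompleteMinor_zero (G : SimpleGraph V) : G.HasCompleteMinor 0 :=
  ⟨Fin.elim0, fun i => i.elim0, fun i => i.elim0, fun i => i.elim0, fun i => i.elim0⟩

lemma HasCompleteMinor.le_card [Finite V] {k : ℕ} (h : G.HasCompleteMinor k) :
    k ≤ Nat.card V := by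
  obtain ⟨B, hne, -, hdisj, -⟩ := h
  choose f hf using hne
  have hinj : Function.Injective f := fun i j hij =>
    by_contra fun hne => (hdisj hne).ne_of_mem (hf i) (hf j) hij
  simpa using Nat.card_le_card_of_injective f hinj

lemma bddAbove_setOf_hasCompleteMinor [Finite V] : BddAbove {k | G.HasCompleteMinor k} :=
  ⟨Nat.card V, fun _ => HasCompleteMinor.le_card⟩

lemma HasCompleteMinor.le_hadwigerNumber [Finite V] {k : ℕ} (h : G.HasCompleteMinor k) :
    k ≤ G.hadwigerNumber :=
  le_csSup bddAbove_setOf_hasCompleteMinor h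

lemma hasCompleteMinor_hadwigerNumber [Finite V] : G.HasCompleteMinor G.hadwigerNumber :=
  Nat.sSup_mem ⟨0, G.hasCompleteMinor_zero⟩ bddAbove_setOf_hasCompleteMinor

lemma HasCompleteMinor.succ_of_induce_compl {s : Set V} {k : ℕ} (hs : s.Nonempty)
    (hconn : (G.induce s).Connected) (hdom : ∀ v ∉ s, ∃ u ∈ s, G.Adj u v)
    (h : (G.induce sᶜ).HasCompleteMinor k) : G.HasCompleteMinor (k + 1) := by
  obtain ⟨B, hBne, hBconn, hBdisj, hBadj⟩ := h
  have hdisj : ∀ j, Disjoint s (Subtype.val '' B j) := by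
    intro j
    rw [Set.disjoint_right]
    rintro - ⟨v, -, rfl⟩
    exact v.2
  have hadj : ∀ j, ∃ u ∈ s, ∃ v ∈ Subtype.val '' B j, G.Adj u v := by
    intro j
    obtain ⟨⟨v, hv⟩, hvB⟩ := hBne j
    obtain ⟨u, hu, huv⟩ := hdom v hv
    exact ⟨u, hu, v, ⟨_, hvB, rfl⟩, huv⟩
  refine ⟨Fin.cons s fun j => Subtype.val '' B j, ?_, ?_, ?_, ?_⟩
  · exact Fin.cases hs fun j => (hBne j).image _
  · exact Fin.cases hconn fun j => (induceInduceIso _ (B j)).connected_iff.mp (hBconn j)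
  · refine Fin.cases (Fin.cases (absurd rfl) fun j _ => hdisj j) fun i => ?_
    refine Fin.cases (fun _ => (hdisj i).symm) fun j hij => ?_
    exact Set.disjoint_image_of_injective Subtype.val_injective
      (hBdisj fun h => hij (congrArg Fin.succ h))
  · refine Fin.cases (Fin.cases (absurd rfl) fun j _ => hadj j) fun i => ?_
    refine Fin.cases (fun _ => ?_) fun j hij => ?_
    · obtain ⟨u, hu, v, hv, huv⟩ := hadj i
      exact ⟨v, hv, u, hu, huv.symm⟩
    · obtain ⟨u, hu, v, hv, huv⟩ := hBadj i j fun h => hij (congrArg Fin.succ h)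
      exact ⟨u, ⟨u, hu, rfl⟩, v, ⟨v, hv, rfl⟩, huv⟩

end SimpleGraph

theorem hadwigerNumber_deleteDominatingSet_general {V : Type*} [Fintype V]
    (G : SimpleGraph V) (D : Finset V) (hne : D.Nonempty)
    (hdom : G.IsDominatingSet D) (hconn : (G.induce (D : Set V)).Connected) :
    (G.induce ((D : Set V)ᶜ)).hadwigerNumber + 1 ≤ G.hadwigerNumber := by
  have hdom' : ∀ v ∉ (D : Set V), ∃ u ∈ (D : Set V), G.Adj u v := fun v hv =>
    (hdom v).resolve_left hv
  exact (SimpleGraph.hasCompleteMinor_hadwigerNumber.succ_of_induce_compl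
    (Finset.coe_nonempty.mpr hne) hconn hdom').le_hadwigerNumber

/-- If `D` is a nonempty connected dominating set of a finite simple graph `G`, then
`h(G) ≥ h(G - D) + 1`, where `G - D` is the induced subgraph on `V(G) \ D`. -/
theorem hadwigerNumber_deleteDominatingSet {V : Type*} [Fintype V] [DecidableEq V]
    (G : SimpleGraph V) (D : Finset V) (hne : D.Nonempty)
    (hdom : G.IsDominatingSet D) (hconn : (G.induce (D : Set V)).Connected) :
    (G.induce ((D : Set V)ᶜ)).hadwigerNumber + 1 ≤ G.hadwigerNumber :=
  hadwigerNumber_deleteDominatingSet_general G D hne hdom hconn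
end
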